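/- arXiv:2007.15697 — 5 statements merged into one kernel-verified Lean document; each statement's English description precedes it below -/
import Mathlib

section
/- In the category of types (Type), let F be a functor with initial algebra (M, μ). Define W(X,Y) = A × (F(X) → Y) (contravariant in X via F, covariant in Y) and V(X) = X. Given f : A → M, the family f'_X : A × (F(X) → X) → X defined by f'_X(a, x) = ⦅x⦆(f(a)) is paranatural from W to V. -/
open CategoryTheory

/-! Paranaturality is catamorphism fusion: if `u` is an algebra homomorphism from `x` to `y`,
then `u ∘ ⦅x⦆` is an algebra homomorphism from `μ` to `y`, so by uniqueness it equals `⦅y⦆`. -/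

def IsAlgebraHom (F : Type ⥤ Type) {X Y : Type} (x : F.obj X → X) (y : F.obj Y → Y)
    (u : X → Y) : Prop :=
  ∀ w : F.obj X, u (x w) = y (F.map (TypeCat.ofHom u) w)

theorem IsAlgebraHom.comp {F : Type ⥤ Type} {X Y Z : Type} {x : F.obj X → X}
    {y : F.obj Y → Y} {z : F.obj Z → Z} {u : X → Y} {v : Y → Z}
    (hv : IsAlgebraHom F y z v) (hu : IsAlgebraHom F x y u) :
    IsAlgebraHom F x z (v ∘ u) := fun w => by
  rw [Function.comp_apply, hu, hv]
  exact congrArg z (F.map_comp_apply (TypeCat.ofHom u) (TypeCat.ofHom v) w).symm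

/-- Given `f : A → M` into the initial `F`-algebra, the family
`f'_X (a, x) = ⦅x⦆ (f a)` is (pointwise) paranatural. -/
theorem paranatural_of_map_into_initial (F : Type ⥤ Type)
    (M : Type) (μ : F.obj M → M)
    (cata : ∀ {X : Type}, (F.obj X → X) → M → X)
    (hcata : ∀ {X : Type} (x : F.obj X → X) (m : F.obj M),
      cata x (μ m) = x (F.map (TypeCat.ofHom (cata x)) m))
    (huniq : ∀ {X : Type} (x : F.obj X → X) (h : M → X),
      (∀ m : F.obj M, h (μ m) = x (F.map (TypeCat.ofHom h) m)) → h = cata x)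
    {A : Type} (f : A → M) :
    ∀ {X Y : Type} (u : X → Y) (x : F.obj X → X) (y : F.obj Y → Y),
      (∀ w : F.obj X, u (x w) = y (F.map (TypeCat.ofHom u) w)) →
      ∀ a : A, u (cata x (f a)) = cata y (f a) := by
  intro X Y u x y hu a
  have fusion : u ∘ cata x = cata y :=
    huniq y (u ∘ cata x) (IsAlgebraHom.comp (x := μ) hu (hcata x))
  exact congrFun fusion (f a)
end

section
/- (Pointwise inductive build fusion / Lemma M, equation for φ.) Let F : Type → Type be a functor with initial algebra (M, μ). Let φ be a family φ_X : A × (F(X) → X) → X that is paranatural in the pointwise sense: for all u : X → Y, x : F(X) → X, y : F(Y) → Y with u ∘ x = y ∘ F.map u, and all a : A, u(φ_X(a,x)) = φ_Y(a,y). Then for every F-algebra x : F(X) → X and a : A, φ_X(a, x) = ⦅x⦆(φ_M(a, μ)). -/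
open CategoryTheory

theorem pointwise_inductive_build_fusion_general (F : Type ⥤ Type)
    (M : Type) (μ : F.obj M → M)
    (cata : ∀ {X : Type}, (F.obj X → X) → M → X)
    (hcata : ∀ {X : Type} (x : F.obj X → X) (m : F.obj M),
      cata x (μ m) = x (F.map (TypeCat.ofHom (cata x)) m))
    {A : Type} (φ : ∀ X : Type, A × (F.obj X → X) → X)
    (hpara : ∀ {X Y : Type} (u : X → Y) (x : F.obj X → X) (y : F.obj Y → Y),
      (∀ w : F.obj X, u (x w) = y (F.map (TypeCat.ofHom u) w)) →
      ∀ a : A, u (φ X (a, x)) = φ Y (a, y)) :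
    ∀ (X : Type) (x : F.obj X → X) (a : A),
      φ X (a, x) = cata x (φ M (a, μ)) :=
  fun _ x a => (hpara (cata x) μ x (hcata x) a).symm

/-- Lemma M, inductive case: a pointwise-paranatural family
`φ_X : A × (F X → X) → X` satisfies `φ_X (a, x) = ⦅x⦆ (φ_M (a, μ))`. -/
theorem pointwise_inductive_build_fusion (F : Type ⥤ Type)
    (M : Type) (μ : F.obj M → M)
    (cata : ∀ {X : Type}, (F.obj X → X) → M → X)
    (hcata : ∀ {X : Type} (x : F.obj X → X) (m : F.obj M),
      cata x (μ m) = x (F.map (TypeCat.ofHom (cata x)) m))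
    (huniq : ∀ {X : Type} (x : F.obj X → X) (h : M → X),
      (∀ m : F.obj M, h (μ m) = x (F.map (TypeCat.ofHom h) m)) → h = cata x)
    {A : Type} (φ : ∀ X : Type, A × (F.obj X → X) → X)
    (hpara : ∀ {X Y : Type} (u : X → Y) (x : F.obj X → X) (y : F.obj Y → Y),
      (∀ w : F.obj X, u (x w) = y (F.map (TypeCat.ofHom u) w)) →
      ∀ a : A, u (φ X (a, x)) = φ Y (a, y)) :
    ∀ (X : Type) (x : F.obj X → X) (a : A),
      φ X (a, x) = cata x (φ M (a, μ)) :=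
  pointwise_inductive_build_fusion_general F M μ cata hcata φ hpara
end

section
/- (Inductive build–fold fusion bijection, Prop 3 (bld1), pointwise version in Type.) Let F : Type → Type be a functor with initial algebra (M, μ). The maps f ↦ f' where f'_X(a,x) = ⦅x⦆(f(a)), and build(φ)(a) = φ_M(a, μ), establish a bijection between functions A → M and pointwise-paranatural families φ_X : A × (F(X) → X) → X (i.e., build(f') = f and build(φ)' = φ for all such f and φ). -/
open CategoryTheory

theorem cata_self_eq_id {F : Type ⥤ Type} {M : Type} {μ : F.obj M → M}
    (cata : ∀ {X : Type}, (F.obj X → X) → M → X)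
    (huniq : ∀ {X : Type} (x : F.obj X → X) (h : M → X),
      (∀ m : F.obj M, h (μ m) = x (F.map (TypeCat.ofHom h) m)) → h = cata x) :
    cata μ = id :=
  (huniq μ id fun m => by rw [show TypeCat.ofHom (id : M → M) = 𝟙 M from rfl, F.map_id]; rfl).symm

/-- Inductive build–fold fusion bijection (Prop 3, bld1, pointwise in `Type`):
`build (f') = f` and `(build φ)' = φ`. -/
theorem inductive_build_bijection (F : Type ⥤ Type)
    (M : Type) (μ : F.obj M → M)
    (cata : ∀ {X : Type}, (F.obj X → X) → M → X)
    (hcata : ∀ {X : Type} (x : F.obj X → X) (m : F.obj M),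
      cata x (μ m) = x (F.map (TypeCat.ofHom (cata x)) m))
    (huniq : ∀ {X : Type} (x : F.obj X → X) (h : M → X),
      (∀ m : F.obj M, h (μ m) = x (F.map (TypeCat.ofHom h) m)) → h = cata x)
    {A : Type} :
    (∀ (f : A → M) (a : A), cata μ (f a) = f a) ∧
    (∀ (φ : ∀ X : Type, A × (F.obj X → X) → X),
      (∀ {X Y : Type} (u : X → Y) (x : F.obj X → X) (y : F.obj Y → Y),
        (∀ w : F.obj X, u (x w) = y (F.map (TypeCat.ofHom u) w)) →
        ∀ a : A, u (φ X (a, x)) = φ Y (a, y)) →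
      ∀ (X : Type) (x : F.obj X → X) (a : A),
        cata x (φ M (a, μ)) = φ X (a, x)) :=
  -- `(build φ)' = φ` is paranaturality of `φ` along the algebra morphism `cata x : (M, μ) → (X, x)`.
  ⟨fun f a => congrFun (cata_self_eq_id cata huniq) (f a),
    fun _ hφ _ x a => hφ (cata x) μ x (hcata x) a⟩
end

section
/- (Coinductive build fusion bijection, Prop 3 (bld2), pointwise version in Type.) Let F : Type → Type be a functor with final coalgebra (N, ν). The maps g ↦ g' where g'_X(p,x) = g(⟦x⟧(p)), and build(ψ)(n) = ψ_N(n, ν), establish a bijection between functions N → B and pointwise-paranatural families ψ_X : X × (X → F(X)) → B. -/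
open CategoryTheory

theorem ana_self_eq_id (F : Type ⥤ Type) (N : Type) (ν : N → F.obj N)
    (ana : ∀ {X : Type}, (X → F.obj X) → X → N)
    (huniq : ∀ {X : Type} (x : X → F.obj X) (h : X → N),
      (∀ p : X, ν (h p) = F.map (TypeCat.ofHom h) (x p)) → h = ana x) :
    ana ν = id :=
  (huniq ν id fun p => show ν p = F.map (𝟙 N) (ν p) by simp).symm

/-- Coinductive build fusion bijection (Prop 3, bld2, pointwise in `Type`):
`build (g') = g` and `(build ψ)' = ψ`. -/
theorem coinductive_build_bijection (F : Type ⥤ Type)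
    (N : Type) (ν : N → F.obj N)
    (ana : ∀ {X : Type}, (X → F.obj X) → X → N)
    (hana : ∀ {X : Type} (x : X → F.obj X) (p : X),
      ν (ana x p) = F.map (TypeCat.ofHom (ana x)) (x p))
    (huniq : ∀ {X : Type} (x : X → F.obj X) (h : X → N),
      (∀ p : X, ν (h p) = F.map (TypeCat.ofHom h) (x p)) → h = ana x)
    {B : Type} :
    (∀ (g : N → B) (n : N), g (ana ν n) = g n) ∧
    (∀ (ψ : ∀ X : Type, X × (X → F.obj X) → B),
      (∀ {X Y : Type} (u : X → Y) (x : X → F.obj X) (y : Y → F.obj Y),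
        (∀ p : X, y (u p) = F.map (TypeCat.ofHom u) (x p)) →
        ∀ p : X, ψ X (p, x) = ψ Y (u p, y)) →
      ∀ (X : Type) (x : X → F.obj X) (p : X),
        ψ N (ana x p, ν) = ψ X (p, x)) := by
  refine ⟨fun g n => ?_, fun ψ hpara X x p => ?_⟩
  · rw [ana_self_eq_id F N ν ana huniq, id]
  · -- `ana x` is a coalgebra morphism from `(X, x)` to `(N, ν)`, so paranaturality applies to it.
    exact (hpara (ana x) x ν (hana x) p).symm
end

section
/- (Fusion equation (fst).) Let F : Type → Type be a functor with initial algebra (M, μ), let φ_X : A × (F(X) → X) → X be a pointwise-paranatural family, and set f = build(φ) : A → M, f(a) = φ_M(a, μ). Then for any F-algebra c : F(C) → C, the fused composite satisfies ⦅c⦆ ∘ f = λ a. φ_C(a, c), i.e., the fold after the build equals the direct paranatural instantiation, eliminating the intermediate datatype M. -/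
open CategoryTheory

theorem fusion_fst_general (F : Type ⥤ Type)
    (M : Type) (μ : F.obj M → M)
    (cata : ∀ {X : Type}, (F.obj X → X) → M → X)
    (hcata : ∀ {X : Type} (x : F.obj X → X) (m : F.obj M),
      cata x (μ m) = x (F.map (TypeCat.ofHom (cata x)) m))
    {A : Type} (φ : ∀ X : Type, A × (F.obj X → X) → X)
    (hpara : ∀ {X Y : Type} (u : X → Y) (x : F.obj X → X) (y : F.obj Y → Y),
      (∀ w : F.obj X, u (x w) = y (F.map (TypeCat.ofHom u) w)) →
      ∀ a : A, u (φ X (a, x)) = φ Y (a, y))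
    (f : A → M) (hf : f = fun a => φ M (a, μ))
    {C : Type} (c : F.obj C → C) :
    (fun a => cata c (f a)) = (fun a => φ C (a, c)) := by
  subst hf
  exact funext (hpara (cata c) μ c (hcata c))

/-- Fusion equation (fst): fold after build equals the direct paranatural
instantiation, eliminating the intermediate datatype `M`. -/
theorem fusion_fst (F : Type ⥤ Type)
    (M : Type) (μ : F.obj M → M)
    (cata : ∀ {X : Type}, (F.obj X → X) → M → X)
    (hcata : ∀ {X : Type} (x : F.obj X → X) (m : F.obj M),
      cata x (μ m) = x (F.map (TypeCat.ofHom (cata x)) m))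
    (huniq : ∀ {X : Type} (x : F.obj X → X) (h : M → X),
      (∀ m : F.obj M, h (μ m) = x (F.map (TypeCat.ofHom h) m)) → h = cata x)
    {A : Type} (φ : ∀ X : Type, A × (F.obj X → X) → X)
    (hpara : ∀ {X Y : Type} (u : X → Y) (x : F.obj X → X) (y : F.obj Y → Y),
      (∀ w : F.obj X, u (x w) = y (F.map (TypeCat.ofHom u) w)) →
      ∀ a : A, u (φ X (a, x)) = φ Y (a, y))
    (f : A → M) (hf : f = fun a => φ M (a, μ))
    {C : Type} (c : F.obj C → C) :
    (fun a => cata c (f a)) = (fun a => φ C (a, c)) :=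
  fusion_fst_general F M μ cata hcata φ hpara f hf c
end
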